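/- Moment matching of the Lanczos process: Let A be an n×n Hermitian complex matrix and let (V_k, T_k, β_k, v_{k+1}) be a Lanczos relation of length k for A with starting vector v. Then for every integer j with 0 ≤ j ≤ 2k−1, v* A^j v = e_1* T_k^j e_1. -/

import Mathlib

/-! Write `j = p + 1 + q` with `p, q < k` (or `j = 0`). Since `Tᵖ` has lower bandwidth `p`, the
residual term `β vₖ₊₁ eₖ*` of the relation annihilates `Tᵖ e₁` for `p < k - 1`, so the Krylov
vectors are `Aᵖ v = V Tᵖ e₁` for `p < k`. As `A` is Hermitian,
`v* Aʲ v = (Aᵖ v)* A (A^q v) = (Tᵖ e₁)* (V* A V) (T^q e₁)`, and `V* A V = T` because `V` has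
orthonormal columns and `vₖ₊₁ ⊥ range V`. -/

open Matrix

/-- A Lanczos relation of length `k` for an `n × n` Hermitian matrix `A` over `𝕜`
with starting unit vector `v`: orthonormal columns `V` with first column `v`, a real
symmetric tridiagonal matrix `T` with positive subdiagonal, `β > 0` and a unit vector
`vNext` orthogonal to the columns of `V`, such that `A V = V T + β vNext eₖ*`. -/
structure LanczosRelation (𝕜 : Type) [RCLike 𝕜] (n k : ℕ)
    (A : Matrix (Fin n) (Fin n) 𝕜) (v : Fin n → 𝕜) where
  kpos : 0 < k
  V : Matrix (Fin n) (Fin k) 𝕜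
  T : Matrix (Fin k) (Fin k) ℝ
  β : ℝ
  vNext : Fin n → 𝕜
  orthonormal : Vᴴ * V = 1
  firstCol : (fun i => V i ⟨0, kpos⟩) = v
  symm : T.IsHermitian
  tridiag : ∀ i j : Fin k, (i : ℕ) + 1 < (j : ℕ) → T i j = 0
  subdiag_pos : ∀ (i : ℕ) (h : i + 1 < k), 0 < T ⟨i + 1, h⟩ ⟨i, by omega⟩
  β_pos : 0 < β
  vNext_unit : star vNext ⬝ᵥ vNext = 1
  vNext_orth : Vᴴ *ᵥ vNext = 0
  relation : A * V = V * T.map (algebraMap ℝ 𝕜) +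
      (algebraMap ℝ 𝕜 β) • vecMulVec vNext (Pi.single ⟨k - 1, by omega⟩ 1)

theorem Matrix.pow_apply_eq_zero_of_add_lt {R : Type*} [Semiring R] {k : ℕ}
    {T : Matrix (Fin k) (Fin k) R} (hT : ∀ i j : Fin k, (j : ℕ) + 1 < i → T i j = 0) :
    ∀ (p : ℕ) (i j : Fin k), (j : ℕ) + p < i → (T ^ p) i j = 0
  | 0, i, j, h => one_apply_ne (Fin.ne_of_val_ne (by omega))
  | p + 1, i, j, h => by
    rw [pow_succ, mul_apply]
    refine Finset.sum_eq_zero fun l _ => ?_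
    by_cases hl : (l : ℕ) + p < i
    · rw [Matrix.pow_apply_eq_zero_of_add_lt hT p i l hl, zero_mul]
    · rw [hT l j (by omega), mul_zero]

theorem Matrix.star_mulVec_dotProduct_mulVec {R : Type*} [CommSemiring R] [StarRing R]
    {l m o : Type*} [Fintype l] [Fintype m] [Fintype o]
    (V : Matrix l m R) (M : Matrix l l R) (W : Matrix l o R) (x : m → R) (y : o → R) :
    star (V *ᵥ x) ⬝ᵥ M *ᵥ W *ᵥ y = star x ⬝ᵥ (Vᴴ * M * W) *ᵥ y := by
  rw [star_mulVec, ← dotProduct_mulVec, mulVec_mulVec, mulVec_mulVec, Matrix.mul_assoc]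

namespace LanczosRelation

variable {𝕜 : Type} [RCLike 𝕜] {n k : ℕ} {A : Matrix (Fin n) (Fin n) 𝕜} {v : Fin n → 𝕜}
  (L : LanczosRelation 𝕜 n k A v)

noncomputable def T𝕜 : Matrix (Fin k) (Fin k) 𝕜 := L.T.map (algebraMap ℝ 𝕜)

def first : Fin k := ⟨0, L.kpos⟩

def last : Fin k := ⟨k - 1, by have := L.kpos; omega⟩

theorem isHermitian_T𝕜 : L.T𝕜.IsHermitian :=
  L.symm.map _ fun r => algebraMap_star_comm r

theorem T𝕜_apply_eq_zero_of_add_one_lt (i j : Fin k) (h : (j : ℕ) + 1 < i) :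
    L.T𝕜 i j = 0 := by
  rw [← L.isHermitian_T𝕜.apply, T𝕜, map_apply, L.tridiag j i h, map_zero, star_zero]

theorem mul_V_eq :
    A * L.V = L.V * L.T𝕜 + algebraMap ℝ 𝕜 L.β • vecMulVec L.vNext (Pi.single L.last 1) :=
  L.relation

theorem pow_mulVec_eq (p : ℕ) (hp : p < k) :
    A ^ p *ᵥ v = L.V *ᵥ L.T𝕜 ^ p *ᵥ Pi.single L.first 1 := by
  induction p with
  | zero =>
    rw [pow_zero, pow_zero, one_mulVec, one_mulVec, mulVec_single_one]
    exact L.firstCol.symm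
  | succ p ih =>
    have hlast : Pi.single L.last 1 ⬝ᵥ L.T𝕜 ^ p *ᵥ Pi.single L.first 1 = 0 := by
      rw [mulVec_single_one, single_one_dotProduct]
      exact pow_apply_eq_zero_of_add_lt L.T𝕜_apply_eq_zero_of_add_one_lt p _ _
        (by simp only [first, last]; omega)
    rw [pow_succ', ← mulVec_mulVec, ih (by omega), mulVec_mulVec, L.mul_V_eq, add_mulVec,
      smul_mulVec, vecMulVec_mulVec, hlast, MulOpposite.op_zero, zero_smul, smul_zero, add_zero]
    simp only [← mulVec_mulVec, pow_succ']

theorem conjTranspose_mul_mul : L.Vᴴ * A * L.V = L.T𝕜 := by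
  rw [Matrix.mul_assoc, L.mul_V_eq, Matrix.mul_add, ← Matrix.mul_assoc, L.orthonormal,
    Matrix.mul_smul, mul_vecMulVec, L.vNext_orth, zero_vecMulVec, smul_zero, Matrix.one_mul,
    add_zero]

theorem moment_eq (hA : A.IsHermitian) (j : ℕ) (hj : j ≤ 2 * k - 1) :
    star v ⬝ᵥ A ^ j *ᵥ v =
      (Pi.single L.first 1 : Fin k → 𝕜) ⬝ᵥ L.T𝕜 ^ j *ᵥ Pi.single L.first 1 := by
  have hstar : star (Pi.single L.first 1 : Fin k → 𝕜) = Pi.single L.first 1 := by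
    rw [← Pi.single_star, star_one]
  obtain rfl | ⟨p, q, hp, hq, rfl⟩ : j = 0 ∨ ∃ p q, p < k ∧ q < k ∧ j = p + 1 + q := by
    have := L.kpos
    rcases j with _ | j
    · exact .inl rfl
    · exact .inr ⟨min j (k - 1), j - min j (k - 1), by omega, by omega, by omega⟩
  · have h0 : v = L.V *ᵥ Pi.single L.first 1 := by
      simpa only [pow_zero, one_mulVec] using L.pow_mulVec_eq 0 L.kpos
    conv_lhs => rw [pow_zero, one_mulVec, h0, star_mulVec, ← dotProduct_mulVec, mulVec_mulVec,
      L.orthonormal]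
    rw [hstar, pow_zero]
  · calc star v ⬝ᵥ A ^ (p + 1 + q) *ᵥ v
        = star (A ^ p *ᵥ v) ⬝ᵥ A *ᵥ A ^ q *ᵥ v := by
          rw [star_mulVec_dotProduct_mulVec, (hA.pow p).eq, ← pow_succ, ← pow_add]
      _ = star (L.T𝕜 ^ p *ᵥ Pi.single L.first 1) ⬝ᵥ
            L.T𝕜 *ᵥ L.T𝕜 ^ q *ᵥ Pi.single L.first 1 := by
          rw [L.pow_mulVec_eq p hp, L.pow_mulVec_eq q hq, star_mulVec_dotProduct_mulVec,
            L.conjTranspose_mul_mul]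
      _ = Pi.single L.first 1 ⬝ᵥ L.T𝕜 ^ (p + 1 + q) *ᵥ Pi.single L.first 1 := by
          rw [star_mulVec_dotProduct_mulVec, (L.isHermitian_T𝕜.pow p).eq, ← pow_succ,
            ← pow_add, hstar]

end LanczosRelation

theorem lanczos_moment_matching
    {n k : ℕ} {A : Matrix (Fin n) (Fin n) ℂ} (hA : A.IsHermitian)
    {v : Fin n → ℂ}
    (L : LanczosRelation ℂ n k A v) :
    ∀ j : ℕ, j ≤ 2 * k - 1 →
      star v ⬝ᵥ (A ^ j) *ᵥ v
        = ((Pi.single (⟨0, L.kpos⟩ : Fin k) 1 ⬝ᵥ (L.T ^ j) *ᵥ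
            Pi.single (⟨0, L.kpos⟩ : Fin k) 1 : ℝ) : ℂ) := by
  intro j hj
  rw [L.moment_eq hA j hj, LanczosRelation.T𝕜, ← Matrix.map_pow]
  simp [LanczosRelation.first]
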